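/- arXiv:quant-ph/0301072 — 6 statements merged into one kernel-verified Lean document; each statement's English description precedes it below -/
import Mathlib

section
/- For any nonzero vector c ∈ ℂ^d with discrete Fourier transform ĉ defined by ĉ_k = (1/√d) Σ_l η^{kl} c_l where η = e^{2πi/d}, the product of the support sizes satisfies |supp(c)| · |supp(ĉ)| ≥ d. -/
open scoped BigOperators Classical ComplexOrder

/-- The primitive `d`-th root of unity `η = e^{2πi/d}`. -/
noncomputable def eta (d : ℕ) : ℂ := Complex.exp (2 * (Real.pi : ℂ) * Complex.I / d)

/-- Discrete Fourier transform: `ĉ_k = (1/√d) Σ_l η^{kl} c_l`. -/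
noncomputable def dft (d : ℕ) (c : Fin d → ℂ) : Fin d → ℂ := fun k =>
  (1 / (Real.sqrt d : ℂ)) * ∑ l : Fin d, eta d ^ ((k : ℕ) * (l : ℕ)) * c l

/-- Number of nonzero components of a vector. -/
noncomputable def suppCard (d : ℕ) (c : Fin d → ℂ) : ℕ :=
  (Finset.univ.filter fun l => c l ≠ 0).card

/-!
Donoho–Stark: let `M = ‖c j‖` be the largest modulus of an entry of `c`. Every Fourier
coefficient is a sum of `|supp c|` unimodular multiples of entries of `c`, so
`‖ĉ_k‖ ≤ |supp c| M / √d`. Fourier inversion writes `√d c_j` as a sum of `|supp ĉ|`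
unimodular multiples of the `ĉ_k`, so `√d M ≤ |supp ĉ| |supp c| M / √d`, i.e.
`d ≤ |supp c| |supp ĉ|`.
-/

open Finset

lemma norm_sum_mul_le_card_support_mul {R ι : Type*} [SeminormedRing R] [Fintype ι]
    (u x : ι → R) (hu : ∀ i, ‖u i‖ ≤ 1) {M : ℝ} (hM : ∀ i, ‖x i‖ ≤ M) :
    ‖∑ i, u i * x i‖ ≤ #{i | x i ≠ 0} * M := by
  rw [← sum_filter_of_ne fun i _ hi => right_ne_zero_of_mul hi]
  calc ‖∑ i with x i ≠ 0, u i * x i‖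
      ≤ ∑ i with x i ≠ 0, ‖u i * x i‖ := norm_sum_le _ _
    _ ≤ ∑ i with x i ≠ 0, M := by
        gcongr with i
        exact (norm_mul_le _ _).trans <|
          (mul_le_of_le_one_left (norm_nonneg _) (hu i)).trans (hM i)
    _ = #{i | x i ≠ 0} * M := by rw [sum_const, nsmul_eq_mul]

lemma IsPrimitiveRoot.sum_pow_mul_eq_ite {K : Type*} [Field K] {ζ : K} {d : ℕ}
    (hζ : IsPrimitiveRoot ζ d) (m : ℕ) :
    ∑ k : Fin d, ζ ^ ((k : ℕ) * m) = if d ∣ m then (d : K) else 0 := by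
  simp_rw [mul_comm _ m, pow_mul]
  rw [Fin.sum_univ_eq_sum_range (fun k => (ζ ^ m) ^ k)]
  split_ifs with hdm
  · simp [(hζ.pow_eq_one_iff_dvd m).2 hdm]
  · have hne : ζ ^ m ≠ 1 := mt (hζ.pow_eq_one_iff_dvd m).1 hdm
    rw [geom_sum_eq hne, ← pow_mul, mul_comm, pow_mul, hζ.pow_eq_one, one_pow, sub_self, zero_div]

lemma norm_eta_pow (d n : ℕ) : ‖eta d ^ n‖ = 1 := by
  have : 2 * (Real.pi : ℂ) * Complex.I / d = ((2 * Real.pi / d : ℝ) : ℂ) * Complex.I := by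
    push_cast; ring
  rw [norm_pow, eta, this, Complex.norm_exp_ofReal_mul_I, one_pow]

lemma dvd_sub_add_iff_eq {d : ℕ} (j l : Fin d) : d ∣ d - j + l ↔ l = j := by
  constructor
  · intro h
    have := Nat.eq_of_dvd_of_lt_two_mul (by omega) h (by omega)
    exact Fin.ext (by omega)
  · rintro rfl
    exact ⟨1, by omega⟩

/-- Fourier inversion at `j`; the exponent `d - j` stands for `-j` modulo `d`. -/
lemma sqrt_mul_eq_sum_eta_pow_mul_dft (d : ℕ) (c : Fin d → ℂ) (j : Fin d) :
    (Real.sqrt d : ℂ) * c j = ∑ k : Fin d, eta d ^ ((k : ℕ) * (d - j)) * dft d c k := by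
  have hη : IsPrimitiveRoot (eta d) d := Complex.isPrimitiveRoot_exp d j.pos.ne'
  have horth (l : Fin d) :
      ∑ k : Fin d, eta d ^ ((k : ℕ) * (d - j + l)) = if l = j then (d : ℂ) else 0 := by
    rw [hη.sum_pow_mul_eq_ite]
    exact if_congr (dvd_sub_add_iff_eq j l) rfl rfl
  calc (Real.sqrt d : ℂ) * c j = 1 / (Real.sqrt d : ℂ) * ((d : ℂ) * c j) := by
        have hd_eq : (Real.sqrt d : ℂ) * Real.sqrt d = d := by
          exact_mod_cast Real.mul_self_sqrt (Nat.cast_nonneg d)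
        rw [← hd_eq]
        field_simp
    _ = 1 / (Real.sqrt d : ℂ) *
          ∑ l : Fin d, (∑ k : Fin d, eta d ^ ((k : ℕ) * (d - j + l))) * c l := by
        simp [horth]
    _ = ∑ k : Fin d, eta d ^ ((k : ℕ) * (d - j)) * dft d c k := by
        simp only [dft, sum_mul, mul_sum]
        rw [sum_comm]
        refine sum_congr rfl fun k _ => sum_congr rfl fun l _ => ?_
        rw [mul_add, pow_add]
        ring

lemma norm_dft_le (d : ℕ) (c : Fin d → ℂ) {M : ℝ} (hM : ∀ l, ‖c l‖ ≤ M) (k : Fin d) :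
    ‖dft d c k‖ ≤ suppCard d c * M / Real.sqrt d := by
  rw [dft, norm_mul, one_div, norm_inv, Complex.norm_real, Real.norm_of_nonneg (Real.sqrt_nonneg _),
    inv_mul_eq_div]
  gcongr
  exact norm_sum_mul_le_card_support_mul _ _ (fun l => (norm_eta_pow _ _).le) hM

theorem support_uncertainty (d : ℕ) (c : Fin d → ℂ) (hc : c ≠ 0) :
    d ≤ suppCard d c * suppCard d (dft d c) := by
  obtain ⟨l, hl⟩ := Function.ne_iff.1 hc
  have : Nonempty (Fin d) := ⟨l⟩
  obtain ⟨j, hj⟩ := Finite.exists_max fun i => ‖c i‖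
  have hM : 0 < ‖c j‖ := (norm_pos_iff.2 hl).trans_le (hj l)
  have hsqrt : 0 < Real.sqrt d := Real.sqrt_pos.2 (by exact_mod_cast l.pos)
  have hinv_bound :
      Real.sqrt d * ‖c j‖ ≤ suppCard d (dft d c) * (suppCard d c * ‖c j‖ / Real.sqrt d) :=
    calc Real.sqrt d * ‖c j‖ = ‖(Real.sqrt d : ℂ) * c j‖ := by
          rw [norm_mul, Complex.norm_real, Real.norm_of_nonneg hsqrt.le]
      _ = ‖∑ k : Fin d, eta d ^ ((k : ℕ) * (d - j)) * dft d c k‖ := by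
          rw [sqrt_mul_eq_sum_eta_pow_mul_dft]
      _ ≤ _ := norm_sum_mul_le_card_support_mul _ _ (fun k => (norm_eta_pow _ _).le)
          (norm_dft_le d c hj)
  rw [mul_div_assoc', le_div_iff₀ hsqrt] at hinv_bound
  have : (d : ℝ) * ‖c j‖ ≤ (suppCard d c * suppCard d (dft d c) : ℕ) * ‖c j‖ :=
    calc (d : ℝ) * ‖c j‖ = Real.sqrt d * ‖c j‖ * Real.sqrt d := by
          rw [mul_right_comm, Real.mul_self_sqrt (Nat.cast_nonneg _)]
      _ ≤ suppCard d (dft d c) * (suppCard d c * ‖c j‖) := hinv_bound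
      _ = (suppCard d c * suppCard d (dft d c) : ℕ) * ‖c j‖ := by push_cast; ring
  exact_mod_cast le_of_mul_le_mul_right this hM
end

section
/- Let d₁ be a divisor of d, and let c ∈ ℂ^d be given by c_l = α · η^{βl} · δ_{0,(l+γ) mod d₁} for some nonzero α ∈ ℂ, integers β, γ, and η = e^{2πi/d}. Then |supp(c)| · |supp(ĉ)| = d, i.e., c achieves equality in the discrete support uncertainty relation. -/
open scoped BigOperators Classical ComplexOrder

/-! The support of `c` is the residue class `l ≡ -γ (mod d₁)`, of size `d / d₁`. Summing over
this class, `ĉ_k` is a nonzero multiple of the geometric sum `∑_{m < d/d₁} ζ^{(k+β) m}` with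
`ζ = η^{d₁}` a primitive `(d/d₁)`-th root of unity; it vanishes unless `d/d₁ ∣ k + β`. So `ĉ`
is supported on a residue class modulo `d / d₁`, of size `d₁`, and the product is `d`. -/

open Finset

theorem Nat.filter_range_mul_mod_eq_image {e n r : ℕ} (hr : r < e) :
    (range (e * n)).filter (· % e = r) = (range n).image (r + e * ·) := by
  ext l
  simp only [mem_filter, mem_range, mem_image]
  constructor
  · rintro ⟨hl, rfl⟩
    exact ⟨l / e, Nat.div_lt_of_lt_mul hl, Nat.mod_add_div l e⟩
  · rintro ⟨m, hm, rfl⟩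
    refine ⟨by nlinarith, ?_⟩
    rw [Nat.add_mul_mod_self_left, Nat.mod_eq_of_lt hr]

theorem Int.natCast_add_emod_eq_zero_iff {e : ℕ} (he : 0 < e) (l : ℕ) (γ : ℤ) :
    ((l : ℤ) + γ) % e = 0 ↔ l % e = ((-γ) % e).toNat := by
  have hr : (0 : ℤ) ≤ (-γ) % e := Int.emod_nonneg _ (by omega)
  rw [← Int.natCast_inj, Int.natCast_mod, Int.toNat_of_nonneg hr,
    Int.emod_eq_emod_iff_emod_sub_eq_zero, sub_neg_eq_add]

theorem sum_fin_ite_add_emod_eq_zero {M : Type*} [AddCommMonoid M] {d e : ℕ} (he : e ∣ d)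
    (he0 : 0 < e) (γ : ℤ) (f : ℕ → M) :
    ∑ l : Fin d, (if ((l : ℕ) + γ) % (e : ℤ) = 0 then f l else 0) =
      ∑ m ∈ range (d / e), f (((-γ) % e).toNat + e * m) := by
  have hr : ((-γ) % e).toNat < e := by
    have := Int.emod_lt_of_pos (-γ) (by omega : (0 : ℤ) < e)
    omega
  rw [Fin.sum_univ_eq_sum_range (fun l => if ((l : ℤ) + γ) % (e : ℤ) = 0 then f l else 0),
    ← sum_filter]
  simp_rw [Int.natCast_add_emod_eq_zero_iff he0]
  rw [← Nat.mul_div_cancel' he, Nat.filter_range_mul_mod_eq_image hr,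
    Nat.mul_div_cancel_left _ he0,
    sum_image fun _ _ _ _ h => Nat.eq_of_mul_eq_mul_left he0 (Nat.add_left_cancel h)]

theorem card_filter_fin_add_emod_eq_zero {d e : ℕ} (he : e ∣ d) (he0 : 0 < e) (γ : ℤ) :
    #{l : Fin d | ((l : ℕ) + γ) % (e : ℤ) = 0} = d / e := by
  rw [card_filter, sum_fin_ite_add_emod_eq_zero he he0 γ (fun _ => 1), sum_const, card_range,
    smul_eq_mul, mul_one]

theorem IsPrimitiveRoot.geom_sum_zpow_ne_zero_iff {K : Type*} [Field K] [CharZero K]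
    {ζ : K} {n : ℕ} (hζ : IsPrimitiveRoot ζ n) (hn : 0 < n) (j : ℤ) :
    ∑ m ∈ range n, (ζ ^ j) ^ m ≠ 0 ↔ (n : ℤ) ∣ j := by
  by_cases hj : (n : ℤ) ∣ j
  · simp [(hζ.zpow_eq_one_iff_dvd j).mpr hj, hn.ne', hj]
  · have hne : ζ ^ j ≠ 1 := fun h => hj ((hζ.zpow_eq_one_iff_dvd j).mp h)
    have hpow : (ζ ^ j) ^ n = 1 := by
      rw [← zpow_natCast, ← zpow_mul, mul_comm, zpow_mul, zpow_natCast, hζ.pow_eq_one, one_zpow]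
    refine iff_of_false (not_not.mpr ?_) hj
    refine eq_zero_of_ne_zero_of_mul_left_eq_zero (sub_ne_zero_of_ne hne.symm) ?_
    rw [mul_neg_geom_sum, hpow, sub_self]

theorem isPrimitiveRoot_eta {d : ℕ} (hd : 0 < d) : IsPrimitiveRoot (eta d) d :=
  Complex.isPrimitiveRoot_exp d hd.ne'

theorem eta_ne_zero (d : ℕ) : eta d ≠ 0 := Complex.exp_ne_zero _

theorem suppCard_eq_div {d e : ℕ} (he : e ∣ d) (hd : 0 < d) (γ : ℤ) {c : Fin d → ℂ}
    (hc : ∀ l : Fin d, c l ≠ 0 ↔ ((l : ℕ) + γ) % (e : ℤ) = 0) :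
    suppCard d c = d / e := by
  rw [suppCard, filter_congr fun l _ => hc l,
    card_filter_fin_add_emod_eq_zero he (Nat.pos_of_dvd_of_pos he hd)]

theorem sum_eta_pow_mul_comb {d d₁ : ℕ} (hdvd : d₁ ∣ d) (hd₁ : 0 < d₁) (α : ℂ) (β γ : ℤ)
    (k : ℕ) :
    ∑ l : Fin d, eta d ^ (k * (l : ℕ)) *
        (α * eta d ^ (β * (l : ℕ)) * if ((l : ℕ) + γ) % (d₁ : ℤ) = 0 then 1 else 0) =
      α * eta d ^ ((k + β) * ((-γ) % d₁)) *
        ∑ m ∈ range (d / d₁), ((eta d ^ d₁) ^ ((k : ℤ) + β)) ^ m := by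
  have hη := eta_ne_zero d
  have hr : (((-γ) % d₁).toNat : ℤ) = (-γ) % d₁ :=
    Int.toNat_of_nonneg (Int.emod_nonneg _ (by omega))
  calc _ = ∑ l : Fin d, if ((l : ℕ) + γ) % (d₁ : ℤ) = 0
          then α * eta d ^ ((k + β) * ((l : ℕ) : ℤ)) else 0 := by
        refine sum_congr rfl fun l _ => ?_
        split_ifs
        · rw [add_mul, zpow_add₀ hη, ← zpow_natCast, Nat.cast_mul]
          ring
        · ring
    _ = _ := by
        rw [sum_fin_ite_add_emod_eq_zero hdvd hd₁ γ fun l => α * eta d ^ ((k + β) * (l : ℤ)),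
          mul_sum]
        refine sum_congr rfl fun m _ => ?_
        rw [← zpow_natCast, ← zpow_natCast, ← zpow_mul, ← zpow_mul, mul_assoc, ← zpow_add₀ hη]
        push_cast
        rw [hr]
        ring_nf

theorem dft_comb_ne_zero_iff {d d₁ : ℕ} (hd : 0 < d) (hdvd : d₁ ∣ d) {α : ℂ} (hα : α ≠ 0)
    (β γ : ℤ) {c : Fin d → ℂ}
    (hc : ∀ l : Fin d, c l =
      α * eta d ^ (β * (l : ℕ)) * (if ((l : ℕ) + γ) % (d₁ : ℤ) = 0 then 1 else 0))
    (k : Fin d) :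
    dft d c k ≠ 0 ↔ ((k : ℕ) + β) % ((d / d₁ : ℕ) : ℤ) = 0 := by
  have hd₁ : 0 < d₁ := Nat.pos_of_dvd_of_pos hdvd hd
  have hζ : IsPrimitiveRoot (eta d ^ d₁) (d / d₁) :=
    (isPrimitiveRoot_eta hd).pow hd (Nat.mul_div_cancel' hdvd).symm
  have hsqrt : (Real.sqrt d : ℂ) ≠ 0 := by
    exact_mod_cast (Real.sqrt_pos.mpr (by exact_mod_cast hd : (0 : ℝ) < d)).ne'
  have hη : ∀ j : ℤ, eta d ^ j ≠ 0 := fun j => zpow_ne_zero j (eta_ne_zero d)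
  simp only [dft, hc, sum_eta_pow_mul_comb hdvd hd₁, ne_eq, mul_eq_zero, one_div, inv_eq_zero,
    hsqrt, hα, hη, false_or]
  rw [← ne_eq, hζ.geom_sum_zpow_ne_zero_iff (Nat.div_pos (Nat.le_of_dvd hd hdvd) hd₁),
    Int.dvd_iff_emod_eq_zero]

theorem support_uncertainty_equality_of_form (d d₁ : ℕ) (hd : 0 < d)
    (hdvd : d₁ ∣ d) (α : ℂ) (hα : α ≠ 0) (β γ : ℤ) (c : Fin d → ℂ)
    (hc : ∀ l : Fin d, c l =
      α * eta d ^ (β * (l : ℕ)) * (if ((l : ℕ) + γ) % (d₁ : ℤ) = 0 then 1 else 0)) :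
    suppCard d c * suppCard d (dft d c) = d := by
  have hsupp : suppCard d c = d / d₁ :=
    suppCard_eq_div hdvd hd γ fun l => by simp [hc, hα, zpow_ne_zero _ (eta_ne_zero d)]
  have hsupp_dft : suppCard d (dft d c) = d / (d / d₁) :=
    suppCard_eq_div (Nat.div_dvd_of_dvd hdvd) hd β (dft_comb_ne_zero_iff hd hdvd hα β γ hc)
  rw [hsupp, hsupp_dft, Nat.div_div_self hdvd hd.ne', Nat.div_mul_cancel hdvd]
end

section
/- If a unit vector c ∈ ℂ^d satisfies S({|c_l|²}) + S({|ĉ_k|²}) = log d, then all nonzero components c_l have equal modulus and all nonzero components ĉ_k have equal modulus, and |supp(c)| · |supp(ĉ)| = d. -/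
/-!
Write `F = U c` for an isometry `U` whose entries are bounded by `μ` (for the DFT, `μ = 1/√d`), and
consider the entire function `Φ(z) = μ⁻ᶻ ∑ₖ conj(Fₖ) |Fₖ|ᶻ (U (c |c|ᶻ))ₖ`. On `Re z = 0` Parseval
and Cauchy–Schwarz give `|Φ| ≤ 1`, on `Re z = 1` the entry bound does, so `|Φ| ≤ 1` on the strip
between by Phragmén–Lindelöf. Also `Φ(0) = ‖c‖² = 1` and `Φ'(0) = (-2 log μ - S(|c|²) - S(|F|²))/2`,
which vanishes exactly in the equality case. Then `1 - Φ` has nonnegative real part near the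
boundary point `0` of the right half-plane and a zero of order at least two there, which is only
possible if `Φ ≡ 1`. At `z = 1` every inequality in the bound must be an equality, and this says
that `|Fₖ| = μ ‖c‖₁` wherever `Fₖ ≠ 0`. Applying the same to `Uᴴ` and `F` gives `|cₗ| = μ ‖F‖₁` on
the support of `c`, and comparing the two `ℓ¹` norms gives `|supp c| · |supp F| · μ² = 1`.
-/

open scoped BigOperators Classical ComplexOrder

/-- Shannon entropy of a probability vector. -/
noncomputable def shannonEntropy (d : ℕ) (p : Fin d → ℝ) : ℝ :=
  -∑ i, p i * Real.log (p i)

open Complex hiding eta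
open Filter Topology Matrix

lemma exists_abs_le_pi_div_two_exp_mul_I_mul_eq {n : ℕ} (hn : 2 ≤ n) {a : ℂ} (ha : a ≠ 0) :
    ∃ θ : ℝ, |θ| ≤ Real.pi / 2 ∧ exp (↑(n * θ) * I) * a = -‖a‖ := by
  have hnR : (2 : ℝ) ≤ n := by exact_mod_cast hn
  refine ⟨arg (-a⁻¹) / n, ?_, ?_⟩
  · rw [abs_div, Nat.abs_cast, div_le_iff₀ (by positivity)]
    calc |arg (-a⁻¹)| ≤ Real.pi := abs_arg_le_pi _
      _ ≤ Real.pi / 2 * n := by nlinarith [Real.pi_pos]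
  · have hpolar := norm_mul_exp_arg_mul_I (-a⁻¹)
    rw [norm_neg, norm_inv] at hpolar
    have he : exp (arg (-a⁻¹) * I) = ‖a‖ * -a⁻¹ := by
      conv_rhs => rw [← hpolar]
      push_cast
      field_simp
    rw [mul_div_cancel₀ _ (by positivity), he]
    field_simp

lemma eventually_eq_zero_of_re_nonneg {ψ : ℂ → ℂ} (hψ : AnalyticAt ℂ ψ 0) (h0 : ψ 0 = 0)
    (h1 : deriv ψ 0 = 0) (hre : ∀ᶠ z in 𝓝[{z | 0 ≤ z.re}] 0, 0 ≤ (ψ z).re) :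
    ∀ᶠ z in 𝓝 0, ψ z = 0 := by
  have h2 : ((2 : ℕ) : ℕ∞) ≤ analyticOrderAt ψ 0 :=
    (natCast_le_analyticOrderAt_iff_iteratedDeriv_eq_zero hψ).2 fun i hi => by
      interval_cases i <;> simp [h0, h1]
  rw [← analyticOrderAt_eq_top]
  by_contra hfin
  obtain ⟨n, hn⟩ := ENat.ne_top_iff_exists.mp hfin
  obtain ⟨g, hg, hg0, hrep⟩ := hψ.analyticOrderAt_eq_natCast.mp hn.symm
  -- Along the ray `t ↦ t e^{iθ}` in the closed right half-plane, `ψ ≈ tⁿ e^{inθ} g 0 < 0`.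
  obtain ⟨θ, hθ, hrot⟩ :=
    exists_abs_le_pi_div_two_exp_mul_I_mul_eq (by exact_mod_cast hn ▸ h2) hg0
  set γ : ℝ → ℂ := fun t => t * exp (θ * I)
  have hγ : Tendsto γ (𝓝[>] 0) (𝓝[{z | 0 ≤ z.re}] 0) := by
    refine tendsto_nhdsWithin_iff.2 ⟨?_, ?_⟩
    · simpa [γ] using ((by fun_prop : Continuous γ).tendsto 0).mono_left nhdsWithin_le_nhds
    · filter_upwards [self_mem_nhdsWithin] with t (ht : 0 < t)
      simp only [γ, re_ofReal_mul, exp_ofReal_mul_I_re]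
      exact mul_nonneg ht.le (Real.cos_nonneg_of_mem_Icc (abs_le.1 hθ))
  have hneg : ∀ᶠ t in 𝓝[>] 0, (exp (↑(n * θ) * I) * g (γ t)).re < 0 := by
    have hlim : Tendsto (fun t => (exp (↑(n * θ) * I) * g (γ t)).re) (𝓝[>] 0)
        (𝓝 (exp (↑(n * θ) * I) * g 0).re) :=
      (continuous_re.tendsto _).comp
        ((hg.continuousAt.tendsto.comp (hγ.mono_right nhdsWithin_le_nhds)).const_mul _)
    refine hlim.eventually_lt_const ?_
    rw [hrot]
    simpa using hg0
  obtain ⟨t, ht, hre_t, hrep_t, hneg_t⟩ := (eventually_mem_nhdsWithin.and ((hγ.eventually hre).and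
    (((hγ.mono_right nhdsWithin_le_nhds).eventually hrep).and hneg))).exists
  have hψt : ψ (γ t) = (t ^ n : ℝ) * (exp (↑(n * θ) * I) * g (γ t)) := by
    rw [hrep_t, smul_eq_mul, sub_zero, ← mul_assoc]
    congr 1
    simp only [γ, mul_pow, ← Complex.exp_nat_mul]
    push_cast
    ring_nf
  rw [hψt, re_ofReal_mul] at hre_t
  exact (mul_neg_of_pos_of_neg (pow_pos ht n) hneg_t).not_ge hre_t

lemma eq_one_of_norm_le_one_on_strip {f : ℂ → ℂ} (hf : Differentiable ℂ f) (h0 : f 0 = 1)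
    (h1 : deriv f 0 = 0) (hle : ∀ z : ℂ, 0 ≤ z.re → z.re ≤ 1 → ‖f z‖ ≤ 1) : f = 1 := by
  have hre : ∀ᶠ z in 𝓝[{z | 0 ≤ z.re}] 0, 0 ≤ (1 - f z).re := by
    have hlt : ∀ᶠ z in 𝓝[{z | 0 ≤ z.re}] (0 : ℂ), z.re < 1 :=
      nhdsWithin_le_nhds <| continuous_re.continuousAt.eventually_lt continuousAt_const (by simp)
    filter_upwards [eventually_mem_nhdsWithin, hlt] with z hz0 hz1
    simpa using (re_le_norm (f z)).trans (hle z hz0 hz1.le)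
  have hzero := eventually_eq_zero_of_re_nonneg (ψ := fun z => 1 - f z)
    (analyticAt_const.sub (hf.analyticAt 0)) (by simp [h0])
    (by rw [deriv_const_sub, h1, neg_zero]) hre
  exact AnalyticOnNhd.eq_of_eventuallyEq (fun z _ => hf.analyticAt z) analyticOnNhd_const
    (hzero.mono fun z hz => (sub_eq_zero.1 hz).symm)

section ExpSum

variable {ι : Type*} [Fintype ι] (a : ι → ℂ) (b : ι → ℝ)

noncomputable def expSum (z : ℂ) : ℂ := ∑ i, a i * exp (z * b i)

lemma hasDerivAt_expSum (z : ℂ) :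
    HasDerivAt (expSum a b) (∑ i, a i * b i * exp (z * b i)) z := by
  unfold expSum
  refine HasDerivAt.fun_sum fun i _ => ?_
  simpa [mul_comm, mul_left_comm, mul_assoc] using
    (((hasDerivAt_id z).mul_const (b i : ℂ)).cexp).const_mul (a i)

lemma differentiable_expSum : Differentiable ℂ (expSum a b) :=
  fun z => (hasDerivAt_expSum a b z).differentiableAt

lemma expSum_zero : expSum a b 0 = ∑ i, a i := by
  simp [expSum]

lemma deriv_expSum_zero : deriv (expSum a b) 0 = ∑ i, a i * b i := by
  simp [(hasDerivAt_expSum a b 0).deriv]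

lemma norm_expSum_le_of_mem_strip {z : ℂ} (hz0 : 0 ≤ z.re) (hz1 : z.re ≤ 1) :
    ‖expSum a b z‖ ≤ ∑ i, ‖a i‖ * Real.exp |b i| := by
  refine (norm_sum_le _ _).trans (Finset.sum_le_sum fun i _ => ?_)
  rw [norm_mul, norm_exp, re_mul_ofReal]
  gcongr
  rcases le_or_gt 0 (b i) with hb | hb
  · exact (mul_le_of_le_one_left hb hz1).trans (le_abs_self _)
  · exact (mul_nonpos_of_nonneg_of_nonpos hz0 hb.le).trans (abs_nonneg _)

lemma norm_expSum_le_one_of_mem_strip (hle0 : ∀ z : ℂ, z.re = 0 → ‖expSum a b z‖ ≤ 1)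
    (hle1 : ∀ z : ℂ, z.re = 1 → ‖expSum a b z‖ ≤ 1) {z : ℂ} (hz0 : 0 ≤ z.re) (hz1 : z.re ≤ 1) :
    ‖expSum a b z‖ ≤ 1 := by
  refine PhragmenLindelof.vertical_strip (differentiable_expSum a b).diffContOnCl
    ⟨0, by simpa using Real.pi_pos, 0, ?_⟩ hle0 hle1 hz0 hz1
  refine Asymptotics.IsBigO.of_bound (∑ i, ‖a i‖ * Real.exp |b i|) ?_
  rw [eventually_inf_principal]
  refine Eventually.of_forall fun w hw => ?_
  simpa using norm_expSum_le_of_mem_strip a b hw.1.le hw.2.le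

lemma expSum_one_eq_one (hsum : ∑ i, a i = 1) (hderiv : ∑ i, a i * b i = 0)
    (hle0 : ∀ z : ℂ, z.re = 0 → ‖expSum a b z‖ ≤ 1)
    (hle1 : ∀ z : ℂ, z.re = 1 → ‖expSum a b z‖ ≤ 1) : expSum a b 1 = 1 :=
  congrFun (eq_one_of_norm_le_one_on_strip (differentiable_expSum a b)
    ((expSum_zero a b).trans hsum) ((deriv_expSum_zero a b).trans hderiv)
    fun _ => norm_expSum_le_one_of_mem_strip a b hle0 hle1) 1

end ExpSum

section Sums

variable {ι : Type*} [Fintype ι]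

lemma norm_sum_mul_le_of_norm_le {u : ι → ℂ} {μ : ℝ} (hu : ∀ i, ‖u i‖ ≤ μ) (x : ι → ℂ) :
    ‖∑ i, u i * x i‖ ≤ μ * ∑ i, ‖x i‖ := by
  rw [Finset.mul_sum]
  refine (norm_sum_le _ _).trans (Finset.sum_le_sum fun i _ => ?_)
  rw [norm_mul]
  gcongr
  exact hu i

lemma norm_eq_of_sum_mul_eq {p q : ι → ℂ} {μ : ℝ} (hq : ∀ i, ‖q i‖ ≤ μ)
    (hsum : ∑ i, p i * q i = μ * ∑ i, ‖p i‖) {i : ι} (hi : p i ≠ 0) : ‖q i‖ = μ := by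
  have hle : ∀ j ∈ Finset.univ, (p j * q j).re ≤ ‖p j‖ * μ := fun j _ =>
    (re_le_norm _).trans (by rw [norm_mul]; gcongr; exact hq j)
  have hre : ∑ j, (p j * q j).re = ∑ j, ‖p j‖ * μ := by
    rw [← re_sum, hsum, ← ofReal_mul, ofReal_re, ← Finset.sum_mul, mul_comm]
  have heq := (Finset.sum_eq_sum_iff_of_le hle).1 hre i (Finset.mem_univ i)
  have hpos : 0 < ‖p i‖ := norm_pos_iff.2 hi
  refine le_antisymm (hq i) (le_of_mul_le_mul_left ?_ hpos)
  calc ‖p i‖ * μ = (p i * q i).re := heq.symm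
    _ ≤ ‖p i‖ * ‖q i‖ := (re_le_norm _).trans (norm_mul _ _).le

lemma norm_sum_mul_eq_of_norm_sum_mul_mul_norm_eq {u x : ι → ℂ} {μ : ℝ} (hu : ∀ i, ‖u i‖ ≤ μ)
    (hv : ‖∑ i, u i * (x i * ‖x i‖)‖ = μ * ∑ i, ‖x i‖ ^ 2)
    (hv0 : ∑ i, u i * (x i * ‖x i‖) ≠ 0) :
    ‖∑ i, u i * x i‖ = μ * ∑ i, ‖x i‖ := by
  set v := ∑ i, u i * (x i * ‖x i‖)
  -- Equality in the triangle inequality for `v` aligns every term `u i * x i * ‖x i‖` with `v`;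
  -- dividing by `‖x i‖ ≥ 0` keeps the terms `u i * x i` aligned with `v`.
  have hle : ∀ i ∈ Finset.univ,
      (star v * (u i * (x i * ‖x i‖))).re ≤ ‖v‖ * (μ * ‖x i‖ ^ 2) :=
    fun i _ => (re_le_norm _).trans <| by
      simp only [norm_mul, norm_star, norm_real, norm_norm, ← sq]
      gcongr
      exact hu i
  have hre : ∑ i, (star v * (u i * (x i * ‖x i‖))).re = ∑ i, ‖v‖ * (μ * ‖x i‖ ^ 2) := by
    rw [← re_sum, ← Finset.mul_sum, ← Finset.mul_sum, ← Finset.mul_sum, ← hv, star_def,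
      conj_mul', ← ofReal_pow, ofReal_re, sq]
  have hterm : ∀ i, (star v * (u i * x i)).re = ‖v‖ * (μ * ‖x i‖) := fun i => by
    have h := (Finset.sum_eq_sum_iff_of_le hle).1 hre i (Finset.mem_univ i)
    rcases eq_or_ne (x i) 0 with hx | hx
    · simp [hx]
    · rw [← mul_assoc (u i), ← mul_assoc, re_mul_ofReal] at h
      refine mul_right_cancel₀ (norm_ne_zero_iff.2 hx) ?_
      rw [h]
      ring
  refine le_antisymm (norm_sum_mul_le_of_norm_le hu x) (le_of_mul_le_mul_left ?_
    (norm_pos_iff.2 hv0))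
  calc ‖v‖ * (μ * ∑ i, ‖x i‖) = (star v * ∑ i, u i * x i).re := by
        simp only [Finset.mul_sum, re_sum, hterm]
    _ ≤ ‖v‖ * ‖∑ i, u i * x i‖ := (re_le_norm _).trans (by rw [norm_mul, norm_star])

lemma norm_dotProduct_le_one {p q : ι → ℂ} (hp : ∑ i, ‖p i‖ ^ 2 = 1)
    (hq : ∑ i, ‖q i‖ ^ 2 = 1) : ‖p ⬝ᵥ q‖ ≤ 1 :=
  calc ‖p ⬝ᵥ q‖ ≤ ∑ i, ‖p i‖ * ‖q i‖ := (norm_sum_le _ _).trans_eq (by simp only [norm_mul])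
    _ ≤ ∑ i, (‖p i‖ ^ 2 + ‖q i‖ ^ 2) / 2 :=
      Finset.sum_le_sum fun i _ => by linarith [two_mul_le_add_sq ‖p i‖ ‖q i‖]
    _ = 1 := by rw [← Finset.sum_div, Finset.sum_add_distrib, hp, hq]; norm_num

lemma star_dotProduct_self_eq (x : ι → ℂ) : star x ⬝ᵥ x = ((∑ i, ‖x i‖ ^ 2 : ℝ) : ℂ) := by
  simp [dotProduct, conj_mul']

end Sums

section Isometry

variable {ι κ : Type*} [Fintype ι] [Fintype κ] [DecidableEq ι] {U : Matrix κ ι ℂ}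

lemma star_mulVec_dotProduct_mulVec (hU : Uᴴ * U = 1) (x y : ι → ℂ) :
    star (U *ᵥ x) ⬝ᵥ (U *ᵥ y) = star x ⬝ᵥ y := by
  rw [star_mulVec, ← dotProduct_mulVec, mulVec_mulVec, hU, one_mulVec]

lemma sum_norm_sq_mulVec (hU : Uᴴ * U = 1) (x : ι → ℂ) :
    ∑ k, ‖(U *ᵥ x) k‖ ^ 2 = ∑ i, ‖x i‖ ^ 2 := by
  exact_mod_cast (star_dotProduct_self_eq (U *ᵥ x)).symm.trans
    ((star_mulVec_dotProduct_mulVec hU x x).trans (star_dotProduct_self_eq x))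

end Isometry

section Interpolant

variable {ι κ : Type*}

-- `x i * ‖x i‖ ^ z`, written with `exp` so that it is entire in `z`; the junk value `log 0 = 0`
-- is harmless since then `x i = 0`.
noncomputable def mulNormCpow (x : ι → ℂ) (z : ℂ) : ι → ℂ :=
  fun i => x i * exp (z * Real.log ‖x i‖)

lemma norm_mulNormCpow (x : ι → ℂ) (z : ℂ) (i : ι) :
    ‖mulNormCpow x z i‖ = ‖x i‖ * Real.exp (z.re * Real.log ‖x i‖) := by
  rw [mulNormCpow, norm_mul, norm_exp, re_mul_ofReal]

lemma norm_mulNormCpow_of_re_eq_zero (x : ι → ℂ) {z : ℂ} (hz : z.re = 0) (i : ι) :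
    ‖mulNormCpow x z i‖ = ‖x i‖ := by
  rw [norm_mulNormCpow, hz, zero_mul, Real.exp_zero, mul_one]

lemma norm_mulNormCpow_of_re_eq_one (x : ι → ℂ) {z : ℂ} (hz : z.re = 1) (i : ι) :
    ‖mulNormCpow x z i‖ = ‖x i‖ ^ 2 := by
  rw [norm_mulNormCpow, hz, one_mul]
  rcases eq_or_ne (x i) 0 with hx | hx
  · simp [hx]
  · rw [Real.exp_log (norm_pos_iff.2 hx), sq]

lemma mulNormCpow_one (x : ι → ℂ) (i : ι) : mulNormCpow x 1 i = x i * ‖x i‖ := by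
  rcases eq_or_ne (x i) 0 with hx | hx
  · simp [mulNormCpow, hx]
  · rw [mulNormCpow, one_mul, ← ofReal_exp, Real.exp_log (norm_pos_iff.2 hx)]

variable [Fintype ι]

-- The interpolant `Φ(z) = μ⁻ᶻ ∑ₖ conj(Fₖ) |Fₖ|ᶻ (U (c |c|ᶻ))ₖ` of `F = U c`, expanded into an
-- exponential sum over pairs `(k, i)`; see `expSum_interp_eq`.
noncomputable def interpCoeff (U : Matrix κ ι ℂ) (c : ι → ℂ) : κ × ι → ℂ :=
  fun p => star ((U *ᵥ c) p.1) * U p.1 p.2 * c p.2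

noncomputable def interpExponent (U : Matrix κ ι ℂ) (c : ι → ℂ) (μ : ℝ) : κ × ι → ℝ :=
  fun p => Real.log ‖(U *ᵥ c) p.1‖ + Real.log ‖c p.2‖ - Real.log μ

variable [Fintype κ] {U : Matrix κ ι ℂ} {c : ι → ℂ} {μ : ℝ}

lemma expSum_interp_eq (z : ℂ) :
    expSum (interpCoeff U c) (interpExponent U c μ) z =
      exp (-(z * Real.log μ)) * (mulNormCpow (star (U *ᵥ c)) z ⬝ᵥ (U *ᵥ mulNormCpow c z)) := by
  simp only [expSum, Fintype.sum_prod_type, dotProduct, mulVec, Finset.mul_sum]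
  refine Finset.sum_congr rfl fun k _ => Finset.sum_congr rfl fun l _ => ?_
  simp only [interpCoeff, interpExponent, mulNormCpow, Pi.star_apply, norm_star, mulVec,
    dotProduct]
  push_cast
  rw [mul_sub, mul_add, exp_sub, exp_add, exp_neg]
  field_simp

variable [DecidableEq ι]

lemma sum_interpCoeff (hU : Uᴴ * U = 1) :
    ∑ p, interpCoeff U c p = ((∑ i, ‖c i‖ ^ 2 : ℝ) : ℂ) := by
  rw [← star_dotProduct_self_eq, ← star_mulVec_dotProduct_mulVec hU, Fintype.sum_prod_type]
  simp only [interpCoeff, mul_assoc, ← Finset.mul_sum]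
  rfl

lemma sum_interpCoeff_mul_interpExponent (hU : Uᴴ * U = 1) :
    ∑ p, interpCoeff U c p * interpExponent U c μ p =
      ((∑ k, ‖(U *ᵥ c) k‖ ^ 2 * Real.log ‖(U *ᵥ c) k‖ + ∑ i, ‖c i‖ ^ 2 * Real.log ‖c i‖
        - (∑ i, ‖c i‖ ^ 2) * Real.log μ : ℝ) : ℂ) := by
  have hrow : ∀ k, ∑ i, interpCoeff U c (k, i) = ((‖(U *ᵥ c) k‖ ^ 2 : ℝ) : ℂ) := fun k => by
    simp only [interpCoeff, mul_assoc, ← Finset.mul_sum]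
    exact (conj_mul' _).trans (ofReal_pow _ _).symm
  have hcol : ∑ p, interpCoeff U c p * Real.log ‖c p.2‖ =
      ((∑ i, ‖c i‖ ^ 2 * Real.log ‖c i‖ : ℝ) : ℂ) := by
    calc ∑ p, interpCoeff U c p * Real.log ‖c p.2‖
        = star (U *ᵥ c) ⬝ᵥ (U *ᵥ fun i => c i * Real.log ‖c i‖) := by
          simp only [Fintype.sum_prod_type, dotProduct, mulVec, Finset.mul_sum, interpCoeff,
            mul_assoc, Pi.star_apply]
      _ = star c ⬝ᵥ fun i => c i * Real.log ‖c i‖ := star_mulVec_dotProduct_mulVec hU _ _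
      _ = _ := by simp [dotProduct, ← mul_assoc, conj_mul']
  simp only [interpExponent, ofReal_sub, ofReal_add, mul_add, mul_sub, Finset.sum_add_distrib,
    Finset.sum_sub_distrib, ← Finset.sum_mul, hcol, sum_interpCoeff hU]
  rw [Fintype.sum_prod_type]
  simp only [← Finset.sum_mul, hrow]
  push_cast
  ring

lemma norm_expSum_interp_le_one_of_re_eq_zero (hU : Uᴴ * U = 1) (hc : ∑ i, ‖c i‖ ^ 2 = 1)
    {z : ℂ} (hz : z.re = 0) : ‖expSum (interpCoeff U c) (interpExponent U c μ) z‖ ≤ 1 := by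
  rw [expSum_interp_eq, norm_mul, norm_exp]
  simp only [neg_re, re_mul_ofReal, hz, zero_mul, neg_zero, Real.exp_zero, one_mul]
  refine norm_dotProduct_le_one ?_ ?_
  · simp only [norm_mulNormCpow_of_re_eq_zero _ hz, Pi.star_apply, norm_star]
    rw [sum_norm_sq_mulVec hU, hc]
  · rw [sum_norm_sq_mulVec hU]
    simp only [norm_mulNormCpow_of_re_eq_zero _ hz, hc]

lemma norm_expSum_interp_le_one_of_re_eq_one (hU : Uᴴ * U = 1) (hμ : 0 < μ)
    (hUμ : ∀ k i, ‖U k i‖ ≤ μ) (hc : ∑ i, ‖c i‖ ^ 2 = 1) {z : ℂ} (hz : z.re = 1) :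
    ‖expSum (interpCoeff U c) (interpExponent U c μ) z‖ ≤ 1 := by
  rw [expSum_interp_eq, norm_mul, norm_exp]
  simp only [neg_re, re_mul_ofReal, hz, one_mul, Real.exp_neg, Real.exp_log hμ]
  have hq : ∀ k, ‖(U *ᵥ mulNormCpow c z) k‖ ≤ μ := fun k =>
    (norm_sum_mul_le_of_norm_le (hUμ k) _).trans_eq
      (by simp only [norm_mulNormCpow_of_re_eq_one _ hz, hc, mul_one])
  calc μ⁻¹ * ‖mulNormCpow (star (U *ᵥ c)) z ⬝ᵥ U *ᵥ mulNormCpow c z‖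
      ≤ μ⁻¹ * (μ * ∑ k, ‖mulNormCpow (star (U *ᵥ c)) z k‖) := by
        rw [dotProduct_comm]
        gcongr
        exact norm_sum_mul_le_of_norm_le hq _
    _ = 1 := by
        simp only [norm_mulNormCpow_of_re_eq_one _ hz, Pi.star_apply, norm_star,
          sum_norm_sq_mulVec hU, hc]
        field_simp

end Interpolant

lemma sum_sq_norm_mul_log_norm {d : ℕ} (x : Fin d → ℂ) :
    ∑ i, ‖x i‖ ^ 2 * Real.log ‖x i‖ = -shannonEntropy d (fun i => ‖x i‖ ^ 2) / 2 := by
  simp only [shannonEntropy, Real.log_pow, neg_neg, Finset.sum_div]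
  refine Finset.sum_congr rfl fun i _ => ?_
  push_cast
  ring

theorem norm_mulVec_eq_of_shannonEntropy_add_eq {m n : ℕ} {U : Matrix (Fin m) (Fin n) ℂ} {μ : ℝ}
    (hU : Uᴴ * U = 1) (hμ : 0 < μ) (hUμ : ∀ k i, ‖U k i‖ ≤ μ) {c : Fin n → ℂ}
    (hc : ∑ i, ‖c i‖ ^ 2 = 1)
    (hent : shannonEntropy n (fun i => ‖c i‖ ^ 2)
      + shannonEntropy m (fun k => ‖(U *ᵥ c) k‖ ^ 2) = -2 * Real.log μ)
    {k : Fin m} (hk : (U *ᵥ c) k ≠ 0) : ‖(U *ᵥ c) k‖ = μ * ∑ i, ‖c i‖ := by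
  have hΦ := expSum_one_eq_one (interpCoeff U c) (interpExponent U c μ)
    (by rw [sum_interpCoeff hU, hc, ofReal_one])
    (by
      rw [sum_interpCoeff_mul_interpExponent hU, sum_sq_norm_mul_log_norm,
        sum_sq_norm_mul_log_norm, hc, ofReal_eq_zero]
      linarith)
    (fun _ hz => norm_expSum_interp_le_one_of_re_eq_zero hU hc hz)
    (fun _ hz => norm_expSum_interp_le_one_of_re_eq_one hU hμ hUμ hc hz)
  rw [expSum_interp_eq, one_mul, exp_neg, ← ofReal_exp, Real.exp_log hμ,
    inv_mul_eq_one₀ (by exact_mod_cast hμ.ne')] at hΦ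
  have hq : ∀ k, ‖(U *ᵥ mulNormCpow c 1) k‖ ≤ μ := fun k =>
    (norm_sum_mul_le_of_norm_le (hUμ k) _).trans_eq
      (by simp only [norm_mulNormCpow_of_re_eq_one _ one_re, hc, mul_one])
  -- `Φ(1) = 1` is equality in the bound of `norm_expSum_interp_le_one_of_re_eq_one`.
  have hqk : ‖(U *ᵥ mulNormCpow c 1) k‖ = μ := by
    refine norm_eq_of_sum_mul_eq hq (hΦ.symm.trans ?_) ?_
    · simp only [norm_mulNormCpow_of_re_eq_one _ one_re, Pi.star_apply, norm_star,
        sum_norm_sq_mulVec hU, hc, ofReal_one, mul_one]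
    · simpa [mulNormCpow_one] using hk
  have hv : (U *ᵥ mulNormCpow c 1) k = ∑ i, U k i * (c i * ‖c i‖) := by
    simp only [mulVec, dotProduct, mulNormCpow_one]
  exact norm_sum_mul_eq_of_norm_sum_mul_mul_norm_eq (hUμ k) (by rw [← hv, hqk, hc, mul_one])
    (by rw [← hv]; exact norm_ne_zero_iff.1 (hqk ▸ hμ.ne'))

lemma norm_eq_of_shannonEntropy_add_eq {n : ℕ} {U : Matrix (Fin n) (Fin n) ℂ} {μ : ℝ}
    (hU : Uᴴ * U = 1) (hμ : 0 < μ) (hUμ : ∀ k i, ‖U k i‖ ≤ μ) {c : Fin n → ℂ}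
    (hc : ∑ i, ‖c i‖ ^ 2 = 1)
    (hent : shannonEntropy n (fun i => ‖c i‖ ^ 2)
      + shannonEntropy n (fun k => ‖(U *ᵥ c) k‖ ^ 2) = -2 * Real.log μ)
    {i : Fin n} (hi : c i ≠ 0) : ‖c i‖ = μ * ∑ k, ‖(U *ᵥ c) k‖ := by
  have hinv : Uᴴ *ᵥ (U *ᵥ c) = c := by rw [mulVec_mulVec, hU, one_mulVec]
  have h := norm_mulVec_eq_of_shannonEntropy_add_eq (U := Uᴴ) (c := U *ᵥ c)
    (by rw [conjTranspose_conjTranspose]; exact mul_eq_one_comm.1 hU) hμ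
    (fun k l => by rw [conjTranspose_apply, norm_star]; exact hUμ l k)
    (by rw [sum_norm_sq_mulVec hU, hc]) (by rw [hinv, add_comm]; exact hent)
    (k := i) (by rw [hinv]; exact hi)
  rwa [hinv] at h

lemma sum_norm_eq_suppCard_mul {d : ℕ} {x : Fin d → ℂ} {a : ℝ}
    (h : ∀ i, x i ≠ 0 → ‖x i‖ = a) : ∑ i, ‖x i‖ = suppCard d x * a := by
  rw [suppCard, ← Finset.sum_filter_of_ne fun i _ hi => norm_ne_zero_iff.1 hi,
    Finset.sum_congr rfl fun i hi => h i (Finset.mem_filter.1 hi).2, Finset.sum_const,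
    nsmul_eq_mul]

lemma suppCard_mul_suppCard_mul_sq_eq_one {m n : ℕ} {x : Fin n → ℂ} {y : Fin m → ℂ} {μ : ℝ}
    (hx : ∀ i, x i ≠ 0 → ‖x i‖ = μ * ∑ k, ‖y k‖) (hy : ∀ k, y k ≠ 0 → ‖y k‖ = μ * ∑ i, ‖x i‖)
    (hx0 : x ≠ 0) : (suppCard n x * suppCard m y : ℝ) * μ ^ 2 = 1 := by
  obtain ⟨i, hi⟩ := Function.ne_iff.1 hx0
  have hpos : 0 < ∑ i, ‖x i‖ :=
    Finset.sum_pos' (fun i _ => norm_nonneg _) ⟨i, Finset.mem_univ i, norm_pos_iff.2 hi⟩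
  refine mul_left_cancel₀ hpos.ne' ?_
  calc (∑ i, ‖x i‖) * ((suppCard n x * suppCard m y : ℝ) * μ ^ 2)
      = suppCard n x * (μ * (suppCard m y * (μ * ∑ i, ‖x i‖))) := by ring
    _ = (∑ i, ‖x i‖) * 1 := by
      rw [← sum_norm_eq_suppCard_mul hy, ← sum_norm_eq_suppCard_mul hx, mul_one]

noncomputable def dftMatrix (d : ℕ) : Matrix (Fin d) (Fin d) ℂ :=
  of fun k l => (1 / (Real.sqrt d : ℂ)) * eta d ^ ((k : ℕ) * (l : ℕ))

lemma dft_eq_mulVec (d : ℕ) (c : Fin d → ℂ) : dft d c = dftMatrix d *ᵥ c := by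
  ext k
  simp [dft, dftMatrix, mulVec, dotProduct, Finset.mul_sum, mul_assoc]

lemma norm_eta (d : ℕ) : ‖eta d‖ = 1 := by
  simp [eta, Complex.norm_exp]

lemma norm_dftMatrix_apply (d : ℕ) (k l : Fin d) : ‖dftMatrix d k l‖ = 1 / Real.sqrt d := by
  simp [dftMatrix, norm_eta]

lemma dftMatrix_conjTranspose_mul_self (d : ℕ) : (dftMatrix d)ᴴ * dftMatrix d = 1 := by
  rcases Nat.eq_zero_or_pos d with rfl | hd
  · exact Subsingleton.elim _ _
  have hζ : IsPrimitiveRoot (eta d) d := by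
    simpa [eta] using Complex.isPrimitiveRoot_exp d hd.ne'
  ext a b
  have hinv : ∀ j : ℕ, star (eta d ^ j) = (eta d ^ j)⁻¹ := fun j =>
    (Complex.inv_eq_conj (by rw [norm_pow, norm_eta, one_pow])).symm
  set ω := star (eta d ^ (a : ℕ)) * eta d ^ (b : ℕ) with hω_def
  have hterm : ∀ k : Fin d, star (dftMatrix d k a) * dftMatrix d k b = ω ^ (k : ℕ) / d := by
    intro k
    have hsqrt : (Real.sqrt d : ℂ) * Real.sqrt d = d := by
      rw [← Complex.ofReal_mul, Real.mul_self_sqrt (Nat.cast_nonneg d), Complex.ofReal_natCast]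
    simp only [dftMatrix, of_apply, star_mul', star_div₀, star_one, Complex.star_def,
      Complex.conj_ofReal, ω, mul_pow, ← pow_mul, map_pow]
    rw [← hsqrt]
    ring_nf
  have hω : ω = 1 ↔ a = b := by
    rw [hω_def, hinv, inv_mul_eq_one₀ (pow_ne_zero _ (hζ.ne_zero hd.ne'))]
    exact ⟨fun h => Fin.ext (hζ.pow_inj a.isLt b.isLt h), fun h => h ▸ rfl⟩
  have hωd : ω ^ d = 1 := by
    rw [hω_def, hinv, mul_pow, inv_pow, ← pow_mul, ← pow_mul, mul_comm _ d, mul_comm _ d, pow_mul,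
      pow_mul, hζ.pow_eq_one, one_pow, one_pow, inv_one, one_mul]
  rw [mul_apply]
  simp only [conjTranspose_apply, hterm, ← Finset.sum_div, one_apply]
  split_ifs with hab
  · rw [hω.2 hab]
    simp [hd.ne']
  · rw [Fin.sum_univ_eq_sum_range (fun i => ω ^ i), geom_sum_eq (mt hω.1 hab), hωd]
    simp

theorem entropic_uncertainty_equality (d : ℕ) (c : Fin d → ℂ)
    (hc : ∑ l, ‖c l‖ ^ 2 = 1)
    (heq : shannonEntropy d (fun l => ‖c l‖ ^ 2)
      + shannonEntropy d (fun k => ‖dft d c k‖ ^ 2) = Real.log d) :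
    (∀ l l' : Fin d, c l ≠ 0 → c l' ≠ 0 → ‖c l‖ = ‖c l'‖) ∧
    (∀ k k' : Fin d, dft d c k ≠ 0 → dft d c k' ≠ 0 → ‖dft d c k‖ = ‖dft d c k'‖) ∧
    suppCard d c * suppCard d (dft d c) = d := by
  have hc0 : c ≠ 0 := by
    rintro rfl
    simp at hc
  have hd : 0 < d := Nat.pos_of_ne_zero (by rintro rfl; simp at hc)
  set μ : ℝ := 1 / Real.sqrt d with hμ_def
  have hμ : 0 < μ := one_div_pos.2 (Real.sqrt_pos.2 (Nat.cast_pos.2 hd))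
  have hUμ : ∀ k l, ‖dftMatrix d k l‖ ≤ μ := fun k l => (norm_dftMatrix_apply d k l).le
  have hent : shannonEntropy d (fun l => ‖c l‖ ^ 2)
      + shannonEntropy d (fun k => ‖(dftMatrix d *ᵥ c) k‖ ^ 2) = -2 * Real.log μ := by
    rw [← dft_eq_mulVec, heq, hμ_def, one_div, Real.log_inv, Real.log_sqrt (Nat.cast_nonneg d)]
    ring
  have hU := dftMatrix_conjTranspose_mul_self d
  have hF := fun k (hk : (dftMatrix d *ᵥ c) k ≠ 0) =>
    norm_mulVec_eq_of_shannonEntropy_add_eq hU hμ hUμ hc hent hk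
  have hC := fun l (hl : c l ≠ 0) => norm_eq_of_shannonEntropy_add_eq hU hμ hUμ hc hent hl
  rw [dft_eq_mulVec]
  refine ⟨fun l l' hl hl' => (hC l hl).trans (hC l' hl').symm,
    fun k k' hk hk' => (hF k hk).trans (hF k' hk').symm, ?_⟩
  have hcount := suppCard_mul_suppCard_mul_sq_eq_one hC hF hc0
  rw [hμ_def, div_pow, one_pow, Real.sq_sqrt (Nat.cast_nonneg d), mul_one_div,
    div_eq_one_iff_eq (Nat.cast_ne_zero.2 hd.ne')] at hcount
  exact_mod_cast hcount
end

section
/- The twirl operation T(ρ) = d^{-2} Σ_{g∈G} g* ρ g, where G = {U_{k,l} ⊗ U_{k,-l}}, maps every density operator ρ on ℂ^d ⊗ ℂ^d to a state that is diagonal in the basis {|Ψ_{kl}⟩}, with diagonal entries ⟨Ψ_{kl}|ρ|Ψ_{kl}⟩. -/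
open scoped BigOperators Classical ComplexOrder

/-- The unitaries `U_{kl} = Σ_r η^{rl} |k+r⟩⟨r|` (index addition mod `d`). -/
noncomputable def Umat (d : ℕ) [NeZero d] (k l : Fin d) : Matrix (Fin d) (Fin d) ℂ :=
  fun i r => if i = k + r then eta d ^ ((r : ℕ) * (l : ℕ)) else 0

/-- The maximally entangled vectors `Ψ_{kl} = (1/√d) Σ_j |j⟩ ⊗ U_{kl}|j⟩`,
as functions on `Fin d × Fin d` (component at `(a,b)` is `(1/√d)·(U_{kl})_{b a}`). -/
noncomputable def Psi (d : ℕ) [NeZero d] (k l : Fin d) : Fin d × Fin d → ℂ :=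
  fun p => (1 / (Real.sqrt d : ℂ)) * Umat d k l p.2 p.1

/-- Rank-one projector `|v⟩⟨v|`. -/
noncomputable def outer {ι : Type*} (v : ι → ℂ) : Matrix ι ι ℂ :=
  fun i j => v i * (starRingEnd ℂ) (v j)

/-- The symmetry group element `U_{k,l} ⊗ U_{k,-l}` on `ℂ^d ⊗ ℂ^d`. -/
noncomputable def Gmat (d : ℕ) [NeZero d] (k l : Fin d) :
    Matrix (Fin d × Fin d) (Fin d × Fin d) ℂ :=
  fun p q => Umat d k l p.1 q.1 * Umat d k (-l) p.2 q.2

/-- The twirl `T(ρ) = d⁻² Σ_{g∈G} g* ρ g`. -/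
noncomputable def twirl (d : ℕ) [NeZero d]
    (ρ : Matrix (Fin d × Fin d) (Fin d × Fin d) ℂ) :
    Matrix (Fin d × Fin d) (Fin d × Fin d) ℂ :=
  (((d : ℂ)) ^ 2)⁻¹ • ∑ k, ∑ l, (Gmat d k l).conjTranspose * ρ * Gmat d k l

/-- Expectation value `⟨v|ρ|v⟩`. -/
noncomputable def expec {ι : Type*} [Fintype ι] (v : ι → ℂ)
    (ρ : Matrix ι ι ℂ) : ℂ :=
  ∑ p, ∑ q, (starRingEnd ℂ) (v p) * ρ p q * v q

/-!
Each `g = U_{k,l} ⊗ U_{k,-l}` is a monomial matrix: it shifts both tensor factors by `k` and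
multiplies by the phase `η^{l(i-j)}`. Averaging `g* ρ g` over `l`, character orthogonality
`∑_l η^{lx} = d·[x = 0]` kills every entry `(p, q)` with `p₂ - p₁ ≠ q₂ - q₁`, and averaging over
`k` replaces the surviving ones by their mean along the diagonal shift. Expanding
`∑ ⟨Ψ_{kl}|ρ|Ψ_{kl}⟩ |Ψ_{kl}⟩⟨Ψ_{kl}|` entrywise, the same orthogonality in `l` yields the same
matrix.
-/

theorem pow_finVal_add {M : Type*} [Monoid M] {d : ℕ} {ζ : M} (hζ : ζ ^ d = 1)
    (a b : Fin d) : ζ ^ ((a + b : Fin d) : ℕ) = ζ ^ (a : ℕ) * ζ ^ (b : ℕ) := by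
  rw [Fin.val_add, ← pow_add, ← pow_eq_pow_mod _ hζ]

theorem eta_isPrimitiveRoot (d : ℕ) [NeZero d] : IsPrimitiveRoot (eta d) d :=
  Complex.isPrimitiveRoot_exp d (NeZero.ne d)

theorem eta_pow_pow_self (d : ℕ) [NeZero d] (n : ℕ) : (eta d ^ n) ^ d = 1 := by
  rw [pow_right_comm, (eta_isPrimitiveRoot d).pow_eq_one, one_pow]

noncomputable def chi (d : ℕ) (x l : Fin d) : ℂ := eta d ^ ((x : ℕ) * (l : ℕ))

theorem chi_comm {d : ℕ} (x l : Fin d) : chi d x l = chi d l x := by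
  rw [chi, chi, mul_comm]

section chi

variable {d : ℕ} [NeZero d]

theorem chi_zero_left (l : Fin d) : chi d 0 l = 1 := by
  simp [chi]

theorem chi_add_left (x y l : Fin d) : chi d (x + y) l = chi d x l * chi d y l := by
  simp only [chi, mul_comm _ (l : ℕ), pow_mul]
  exact pow_finVal_add (eta_pow_pow_self d l) x y

theorem chi_neg_left (x l : Fin d) : chi d (-x) l = (chi d x l)⁻¹ :=
  eq_inv_of_mul_eq_one_left (by rw [← chi_add_left, neg_add_cancel, chi_zero_left])

theorem chi_neg_right (x l : Fin d) : chi d x (-l) = chi d (-x) l := by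
  rw [chi_comm, chi_neg_left, chi_neg_left, chi_comm]

theorem star_chi (x l : Fin d) : star (chi d x l) = chi d (-x) l := by
  rw [chi_neg_left, Complex.inv_eq_conj]
  · rfl
  · rw [chi, norm_pow, (eta_isPrimitiveRoot d).norm'_eq_one (NeZero.ne d), one_pow]

theorem sum_chi_right (x : Fin d) : ∑ l, chi d x l = if x = 0 then (d : ℂ) else 0 := by
  split_ifs with hx
  · simp [hx, chi_zero_left]
  · have h1 : eta d ^ (x : ℕ) ≠ 1 :=
      (eta_isPrimitiveRoot d).pow_ne_one_of_pos_of_lt (Fin.val_ne_zero_iff.mpr hx) x.isLt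
    simp only [chi, pow_mul]
    rw [Fin.sum_univ_eq_sum_range (fun l => (eta d ^ (x : ℕ)) ^ l), geom_sum_eq h1,
      eta_pow_pow_self, sub_self, zero_div]

end chi

theorem Matrix.conjTranspose_mul_mul_apply_of_monomial {ι α : Type*} [Fintype ι] [DecidableEq ι]
    [NonUnitalSemiring α] [StarRing α] {M : Matrix ι ι α} {σ : ι → ι} {c : ι → α}
    (hM : ∀ a p, M a p = if a = σ p then c p else 0) (ρ : Matrix ι ι α) (p q : ι) :
    (M.conjTranspose * ρ * M) p q = star (c p) * ρ (σ p) (σ q) * c q := by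
  simp [Matrix.mul_apply, hM, apply_ite star]

theorem inv_sqrt_mul_inv_sqrt (d : ℕ) : (Real.sqrt d : ℂ)⁻¹ * (Real.sqrt d : ℂ)⁻¹ = (d : ℂ)⁻¹ := by
  simp [← mul_inv, ← Complex.ofReal_mul]

section entries

variable {d : ℕ} [NeZero d]

theorem Umat_apply (k l i r : Fin d) : Umat d k l i r = if i = k + r then chi d r l else 0 :=
  rfl

theorem Gmat_apply (k l : Fin d) (a p : Fin d × Fin d) :
    Gmat d k l a p = if a = (k + p.1, k + p.2) then chi d (p.1 - p.2) l else 0 := by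
  simp only [Gmat, Umat_apply, Prod.ext_iff, ite_zero_mul_ite_zero, sub_eq_add_neg, chi_add_left,
    chi_neg_right]

theorem twirl_apply (ρ : Matrix (Fin d × Fin d) (Fin d × Fin d) ℂ) (p q : Fin d × Fin d) :
    twirl d ρ p q = if p.2 - p.1 = q.2 - q.1 then
      (d : ℂ)⁻¹ * ∑ a, ρ (a + p.1, a + p.2) (a + q.1, a + q.2) else 0 := by
  have hphase (k : Fin d) :
      ∑ l, star (chi d (p.1 - p.2) l) * ρ (k + p.1, k + p.2) (k + q.1, k + q.2) *
          chi d (q.1 - q.2) l =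
        if p.2 - p.1 = q.2 - q.1 then d * ρ (k + p.1, k + p.2) (k + q.1, k + q.2) else 0 := by
    simp_rw [mul_right_comm _ (ρ _ _), star_chi, ← chi_add_left, ← Finset.sum_mul, sum_chi_right,
      neg_sub, add_eq_zero_iff_eq_neg, neg_sub, ite_mul, zero_mul]
  simp only [twirl, Matrix.smul_apply, Matrix.sum_apply,
    Matrix.conjTranspose_mul_mul_apply_of_monomial (Gmat_apply _ _), hphase, smul_eq_mul]
  split_ifs
  · rw [← Finset.mul_sum, ← mul_assoc, sq, mul_inv, inv_mul_cancel_right₀ (NeZero.ne (d : ℂ))]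
  · simp

theorem Psi_apply (k l : Fin d) (p : Fin d × Fin d) :
    Psi d k l p = if p.2 = k + p.1 then (Real.sqrt d : ℂ)⁻¹ * chi d p.1 l else 0 := by
  simp [Psi, Umat_apply]

theorem expec_Psi (k l : Fin d) (ρ : Matrix (Fin d × Fin d) (Fin d × Fin d) ℂ) :
    expec (Psi d k l) ρ = (d : ℂ)⁻¹ * ∑ a, ∑ b, chi d (b - a) l * ρ (a, k + a) (b, k + b) := by
  simp only [expec, Psi_apply, apply_ite (starRingEnd ℂ), map_mul, map_inv₀, Complex.conj_ofReal,
    map_zero, ite_mul, zero_mul, mul_ite, mul_zero, Fintype.sum_prod_type, Finset.sum_ite_eq',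
    Finset.mem_univ, if_true, Finset.sum_ite_irrel, Finset.sum_const_zero, Finset.mul_sum]
  refine Fintype.sum_congr _ _ fun a => Fintype.sum_congr _ _ fun b => ?_
  rw [starRingEnd_apply, star_chi, sub_eq_add_neg, chi_add_left, ← inv_sqrt_mul_inv_sqrt d]
  ring

theorem outer_Psi_apply (k l : Fin d) (p q : Fin d × Fin d) :
    outer (Psi d k l) p q =
      if p.2 = k + p.1 ∧ q.2 = k + q.1 then (d : ℂ)⁻¹ * chi d (p.1 - q.1) l else 0 := by
  simp only [outer, Psi_apply, apply_ite (starRingEnd ℂ), map_zero, ite_zero_mul_ite_zero]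
  congr 1
  rw [map_mul, map_inv₀, Complex.conj_ofReal, starRingEnd_apply, star_chi, sub_eq_add_neg,
    chi_add_left, ← inv_sqrt_mul_inv_sqrt d]
  ring

theorem sum_expec_smul_outer_Psi_apply (k : Fin d) (ρ : Matrix (Fin d × Fin d) (Fin d × Fin d) ℂ)
    (p q : Fin d × Fin d) :
    (∑ l, expec (Psi d k l) ρ • outer (Psi d k l)) p q =
      if p.2 = k + p.1 ∧ q.2 = k + q.1 then
        (d : ℂ)⁻¹ * ∑ a, ρ (a, k + a) (a + (q.1 - p.1), k + (a + (q.1 - p.1))) else 0 := by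
  have horth (a b : Fin d) :
      ∑ l, chi d (b - a) l * chi d (p.1 - q.1) l = if b = a + (q.1 - p.1) then (d : ℂ) else 0 := by
    have hcond : b - a + (p.1 - q.1) = 0 ↔ b = a + (q.1 - p.1) := by
      rw [← sub_eq_zero (a := b), show b - (a + (q.1 - p.1)) = b - a + (p.1 - q.1) by abel]
    simp_rw [← chi_add_left, sum_chi_right, hcond]
  simp only [Matrix.sum_apply, Matrix.smul_apply, smul_eq_mul, outer_Psi_apply, expec_Psi, mul_ite,
    mul_zero, Finset.sum_ite_irrel, Finset.sum_const_zero]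
  refine if_congr Iff.rfl ?_ rfl
  calc ∑ l, (d : ℂ)⁻¹ * (∑ a, ∑ b, chi d (b - a) l * ρ (a, k + a) (b, k + b)) *
          ((d : ℂ)⁻¹ * chi d (p.1 - q.1) l)
      = (d : ℂ)⁻¹ * (d : ℂ)⁻¹ * ∑ a, ∑ b,
          ρ (a, k + a) (b, k + b) * ∑ l, chi d (b - a) l * chi d (p.1 - q.1) l := by
        simp_rw [Finset.mul_sum, Finset.sum_mul]
        rw [Finset.sum_comm]
        refine Fintype.sum_congr _ _ fun a => ?_
        rw [Finset.sum_comm]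
        refine Fintype.sum_congr _ _ fun b => Fintype.sum_congr _ _ fun l => ?_
        ring
    _ = (d : ℂ)⁻¹ * ∑ a, ρ (a, k + a) (a + (q.1 - p.1), k + (a + (q.1 - p.1))) := by
        simp_rw [horth, mul_ite, mul_zero, Finset.sum_ite_eq', Finset.mem_univ, if_true,
          ← Finset.sum_mul]
        field_simp

theorem sum_sum_expec_smul_outer_Psi_apply (ρ : Matrix (Fin d × Fin d) (Fin d × Fin d) ℂ)
    (p q : Fin d × Fin d) :
    (∑ k, ∑ l, expec (Psi d k l) ρ • outer (Psi d k l)) p q =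
      if p.2 - p.1 = q.2 - q.1 then
        (d : ℂ)⁻¹ * ∑ a, ρ (a + p.1, a + p.2) (a + q.1, a + q.2) else 0 := by
  have hk (k : Fin d) : (p.2 = k + p.1 ∧ q.2 = k + q.1) ↔ (k = p.2 - p.1 ∧ k = q.2 - q.1) := by
    simp only [eq_sub_iff_add_eq, eq_comm]
  rw [Matrix.sum_apply]
  simp_rw [sum_expec_smul_outer_Psi_apply, hk, ite_and, Finset.sum_ite_eq',
    Finset.mem_univ, if_true]
  split_ifs with h
  · congr 1
    refine (Fintype.sum_equiv (Equiv.addRight p.1) _ _ fun a => ?_).symm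
    rw [Equiv.coe_addRight]
    congr 2 <;> grind
  · rfl

end entries

theorem twirl_diagonalizes_general (d : ℕ) [NeZero d]
    (ρ : Matrix (Fin d × Fin d) (Fin d × Fin d) ℂ) :
    twirl d ρ = ∑ k, ∑ l, expec (Psi d k l) ρ • outer (Psi d k l) := by
  ext p q
  rw [twirl_apply, sum_sum_expec_smul_outer_Psi_apply]

theorem twirl_diagonalizes (d : ℕ) [NeZero d]
    (ρ : Matrix (Fin d × Fin d) (Fin d × Fin d) ℂ)
    (hρ : ρ.PosSemidef) (htr : ρ.trace = 1) :
    twirl d ρ = ∑ k, ∑ l, expec (Psi d k l) ρ • outer (Psi d k l) :=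
  twirl_diagonalizes_general d ρ
end

section
/- Any map of the form M(X) = Σ_j σ_j tr(F_j X), where {F_j} is a POVM and {σ_j} are density operators, is entanglement breaking: for every bipartite density operator ρ on H ⊗ ℂ^d, the state (id ⊗ M)(ρ) is separable. -/
open scoped BigOperators Classical ComplexOrder

/-- Elementary tensor (Kronecker product) of matrices, indexed by pairs. -/
noncomputable def prodMat {n m : ℕ} (A : Matrix (Fin n) (Fin n) ℂ)
    (B : Matrix (Fin m) (Fin m) ℂ) : Matrix (Fin n × Fin m) (Fin n × Fin m) ℂ :=
  fun p q => A p.1 q.1 * B p.2 q.2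

/-- Separability: convex combination of product density operators. -/
def Separable {n m : ℕ} (σ : Matrix (Fin n × Fin m) (Fin n × Fin m) ℂ) : Prop :=
  ∃ (N : ℕ) (p : Fin N → ℝ) (A : Fin N → Matrix (Fin n) (Fin n) ℂ)
    (B : Fin N → Matrix (Fin m) (Fin m) ℂ),
    (∀ i, 0 ≤ p i) ∧ (∑ i, p i = 1) ∧
    (∀ i, (A i).PosSemidef ∧ (A i).trace = 1) ∧
    (∀ i, (B i).PosSemidef ∧ (B i).trace = 1) ∧
    σ = ∑ i, ((p i : ℝ) : ℂ) • prodMat (A i) (B i)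

/-!
Write `X_j = tr₂ (ρ (1 ⊗ F_j))` for the unnormalised states left on the first system after
outcome `j`; then `(id ⊗ M)(ρ) = Σ_j X_j ⊗ σ_j`. Each `X_j` is positive semidefinite: writing
`F_j` as a sum of rank-one terms `v v*`, each term contributes `K* ρ K` with `K = 1 ⊗ v`.
Since `Σ_j F_j = 1`, the traces add up to `tr ρ = 1`, so normalising the `X_j` exhibits the
output as a convex combination of product states.
-/

section PartialTrace

open scoped Matrix

variable {ι κ : Type*} [Fintype κ]

/-- The partial trace `tr₂ (ρ (1 ⊗ F))` over the second tensor factor. -/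
def partialTraceMul {R : Type*} [CommSemiring R] (ρ : Matrix (ι × κ) (ι × κ) R)
    (F : Matrix κ κ R) : Matrix ι ι R :=
  Matrix.of fun a b => ∑ r, ∑ s, F s r * ρ (a, r) (b, s)

lemma partialTraceMul_sum {R J : Type*} [CommSemiring R] (ρ : Matrix (ι × κ) (ι × κ) R)
    (s : Finset J) (F : J → Matrix κ κ R) :
    partialTraceMul ρ (∑ j ∈ s, F j) = ∑ j ∈ s, partialTraceMul ρ (F j) := by
  ext a b
  simp only [partialTraceMul, Matrix.of_apply, Matrix.sum_apply, Finset.sum_mul]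
  exact (Finset.sum_congr rfl fun r _ => Finset.sum_comm).trans Finset.sum_comm

lemma trace_partialTraceMul_one {R : Type*} [CommSemiring R] [Fintype ι] [DecidableEq κ]
    (ρ : Matrix (ι × κ) (ι × κ) R) : (partialTraceMul ρ 1).trace = ρ.trace := by
  simp [partialTraceMul, Matrix.trace, Matrix.one_apply, Fintype.sum_prod_type]

variable {𝕜 : Type*} [RCLike 𝕜]

lemma partialTraceMul_vecMulVec [Fintype ι] [DecidableEq ι] (ρ : Matrix (ι × κ) (ι × κ) 𝕜)
    (v : κ → 𝕜) :
    partialTraceMul ρ (Matrix.vecMulVec v (star v)) =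
      (Matrix.of fun (p : ι × κ) a => if p.1 = a then v p.2 else 0)ᴴ * ρ *
        Matrix.of fun (p : ι × κ) a => if p.1 = a then v p.2 else 0 := by
  ext a b
  simp only [partialTraceMul, Matrix.vecMulVec_apply, Pi.star_apply, RCLike.star_def,
    Matrix.of_apply, Matrix.mul_apply, Matrix.conjTranspose_apply, apply_ite (starRingEnd 𝕜),
    map_zero, ite_mul, zero_mul, Fintype.sum_prod_type, Finset.sum_ite_irrel,
    Finset.sum_const_zero, Finset.sum_ite_eq', Finset.mem_univ, ↓reduceIte, mul_ite,
    Finset.sum_mul, mul_zero]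
  rw [Finset.sum_comm]
  exact Finset.sum_congr rfl fun s _ => Finset.sum_congr rfl fun r _ => by ring

lemma Matrix.PosSemidef.partialTraceMul [Fintype ι] {ρ : Matrix (ι × κ) (ι × κ) 𝕜}
    {F : Matrix κ κ 𝕜} (hρ : ρ.PosSemidef) (hF : F.PosSemidef) :
    (partialTraceMul ρ F).PosSemidef := by
  classical
  obtain ⟨m, v, rfl⟩ := Matrix.posSemidef_iff_eq_sum_vecMulVec.mp hF
  rw [partialTraceMul_sum]
  refine Matrix.posSemidef_sum _ fun i _ => ?_
  rw [partialTraceMul_vecMulVec]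
  exact hρ.conjTranspose_mul_mul_same _

end PartialTrace

lemma Matrix.PosSemidef.exists_density_smul_eq {ι : Type*} [Fintype ι] [DecidableEq ι]
    [Nonempty ι] {X : Matrix ι ι ℂ} (hX : X.PosSemidef) :
    ∃ A : Matrix ι ι ℂ, (A.PosSemidef ∧ A.trace = 1) ∧ ((X.trace.re : ℝ) : ℂ) • A = X := by
  have hre : ((X.trace.re : ℝ) : ℂ) = X.trace :=
    (Complex.eq_re_of_ofReal_le (by rw [Complex.ofReal_zero]; exact hX.trace_nonneg)).symm
  have hpos : 0 ≤ X.trace.re := (Complex.nonneg_iff.mp hX.trace_nonneg).1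
  by_cases h0 : X.trace = 0
  · refine ⟨(Fintype.card ι : ℝ)⁻¹ • 1, ⟨?_, ?_⟩, ?_⟩
    · exact Matrix.PosSemidef.one.smul (by positivity)
    · simp [Matrix.trace_smul]
    · simp [(hX.trace_eq_zero_iff).mp h0]
  · refine ⟨((X.trace.re⁻¹ : ℝ) : ℂ) • X, ⟨?_, ?_⟩, ?_⟩
    · exact hX.smul (Complex.zero_le_real.mpr (inv_nonneg.mpr hpos))
    · rw [Matrix.trace_smul, smul_eq_mul, Complex.ofReal_inv, hre, inv_mul_cancel₀ h0]
    · rw [smul_smul, Complex.ofReal_inv, hre, mul_inv_cancel₀ h0, one_smul]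

lemma prodMat_smul_left {n m : ℕ} (c : ℂ) (A : Matrix (Fin n) (Fin n) ℂ)
    (B : Matrix (Fin m) (Fin m) ℂ) : prodMat (c • A) B = c • prodMat A B := by
  ext p q
  simp [prodMat, mul_assoc]

lemma separable_sum_prodMat {n m k : ℕ} (X : Fin k → Matrix (Fin n) (Fin n) ℂ)
    (hX : ∀ j, (X j).PosSemidef) (htr : ∑ j, (X j).trace = 1)
    (σ : Fin k → Matrix (Fin m) (Fin m) ℂ) (hσ : ∀ j, (σ j).PosSemidef ∧ (σ j).trace = 1) :
    Separable (∑ j, prodMat (X j) (σ j)) := by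
  have : Nonempty (Fin n) := by
    refine Fin.pos_iff_nonempty.mp (Nat.pos_of_ne_zero fun hn => ?_)
    subst hn
    simp [Matrix.trace] at htr
  choose A hA hXA using fun j => (hX j).exists_density_smul_eq
  refine ⟨k, fun j => (X j).trace.re, A, σ, fun j => ?_, ?_, hA, hσ, ?_⟩
  · exact (Complex.nonneg_iff.mp (hX j).trace_nonneg).1
  · simpa using congrArg Complex.re htr
  · simp_rw [← prodMat_smul_left, hXA]

theorem entanglement_breaking_of_measure_prepare
    (d d₂ m n : ℕ)
    (F : Fin m → Matrix (Fin d) (Fin d) ℂ)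
    (hF : ∀ j, (F j).PosSemidef) (hFsum : ∑ j, F j = 1)
    (σ : Fin m → Matrix (Fin d₂) (Fin d₂) ℂ)
    (hσ : ∀ j, (σ j).PosSemidef ∧ (σ j).trace = 1)
    (ρ : Matrix (Fin n × Fin d) (Fin n × Fin d) ℂ)
    (hρ : ρ.PosSemidef) (htr : ρ.trace = 1) :
    Separable (fun (p q : Fin n × Fin d₂) =>
      ∑ j, (∑ r, ∑ s, F j s r * ρ (p.1, r) (q.1, s)) * σ j p.2 q.2) := by
  have htrace : ∑ j, (partialTraceMul ρ (F j)).trace = 1 := by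
    rw [← Matrix.trace_sum, ← partialTraceMul_sum, hFsum, trace_partialTraceMul_one, htr]
  refine (congrArg Separable ?_).mpr
    (separable_sum_prodMat _ (fun j => hρ.partialTraceMul (hF j)) htrace σ hσ)
  ext p q
  simp only [Matrix.sum_apply, prodMat, partialTraceMul, Matrix.of_apply]
end

section
/- Let d = d₁d₂ and λ_l = (1/d₂)·δ_{0, l mod d₁}. Then, with Ψ_l = Ψ_{l0} = (1/√d) Σ_j |j⟩⊗|j+l⟩, the state ρ_λ = Σ_l λ_l |Ψ_l⟩⟨Ψ_l| factorizes as ρ_λ = |Ψ_{00}^{(d₁)}⟩⟨Ψ_{00}^{(d₁)}| ⊗ Σ_{k=0}^{d₂-1} (1/d₂)|Ψ_{k0}^{(d₂)}⟩⟨Ψ_{k0}^{(d₂)}| under the natural identification ℂ^d⊗ℂ^d ≅ (ℂ^{d₁}⊗ℂ^{d₁})⊗(ℂ^{d₂}⊗ℂ^{d₂}) given by j ↔ (j mod d₁, j div d₁) in each factor. -/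
open scoped BigOperators Classical ComplexOrder

/-- The maximally entangled vectors `Ψ_{l0} = (1/√d) Σ_j |j⟩⊗|j+l⟩` (mod `d`). -/
noncomputable def Psi' (d : ℕ) [NeZero d] (l : Fin d) : Fin d × Fin d → ℂ :=
  fun p => if p.2 = p.1 + l then (1 / (Real.sqrt d : ℂ)) else 0

/-- `j mod d₁` as an element of `Fin d₁`, for `j : Fin (d₁ * d₂)`. -/
def finMod {d₁ d₂ : ℕ} [NeZero d₁] (a : Fin (d₁ * d₂)) : Fin d₁ :=
  ⟨(a : ℕ) % d₁, Nat.mod_lt _ (Nat.pos_of_ne_zero (NeZero.ne d₁))⟩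

/-- `j div d₁` as an element of `Fin d₂`, for `j : Fin (d₁ * d₂)`. -/
def finDiv {d₁ d₂ : ℕ} [NeZero d₁] (a : Fin (d₁ * d₂)) : Fin d₂ :=
  ⟨(a : ℕ) / d₁, Nat.div_lt_of_lt_mul a.isLt⟩

private lemma conj_sqrt_mul (n : ℕ) (hn : 0 < n) :
    (1 / (Real.sqrt n : ℂ)) * (starRingEnd ℂ) (1 / (Real.sqrt n : ℂ)) = 1 / (n : ℂ) := by
  rw [map_div₀, map_one, Complex.conj_ofReal, div_mul_div_comm, one_mul,
    ← Complex.ofReal_mul, Real.mul_self_sqrt (by positivity), Complex.ofReal_natCast]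

private lemma nat_key (d₁ d₂ : ℕ) (h₁ : 0 < d₁) (x y : ℕ) (hm : x % d₁ = y % d₁) :
    x ≡ y [MOD d₁ * d₂] ↔ x / d₁ ≡ y / d₁ [MOD d₂] := by
  constructor
  · intro h
    have h2 : d₁ * (x / d₁) + x % d₁ ≡ d₁ * (y / d₁) + x % d₁ [MOD d₁ * d₂] := by
      rw [Nat.div_add_mod, hm, Nat.div_add_mod]; exact h
    exact Nat.ModEq.mul_left_cancel' h₁.ne' (Nat.ModEq.add_right_cancel' _ h2)
  · intro h
    have h2 := (Nat.ModEq.mul_left' d₁ h).add_right (x % d₁)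
    rwa [Nat.div_add_mod, show d₁ * (y / d₁) + x % d₁ = d₁ * (y / d₁) + y % d₁ by rw [hm],
      Nat.div_add_mod] at h2

private lemma nat_main (d₁ d₂ : ℕ) (h₁ : 0 < d₁) (A B A' B' : ℕ) :
    (B % d₁ = A % d₁ ∧ B' + A ≡ A' + B [MOD d₁ * d₂]) ↔
    (B % d₁ = A % d₁ ∧ B' % d₁ = A' % d₁ ∧
      B' / d₁ + A / d₁ ≡ A' / d₁ + B / d₁ [MOD d₂]) := by
  constructor
  · rintro ⟨h1, h2⟩
    have h1' : B ≡ A [MOD d₁] := h1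
    have h2' : B' + A ≡ A' + B [MOD d₁] := h2.of_dvd ⟨d₂, rfl⟩
    have hq2 : B' ≡ A' [MOD d₁] :=
      Nat.ModEq.add_right_cancel' A (h2'.trans (Nat.ModEq.add_left A' h1'))
    have hq2' : B' % d₁ = A' % d₁ := hq2
    have hm : (B' + A) % d₁ = (A' + B) % d₁ := hq2.add h1'.symm
    have h3 := (nat_key d₁ d₂ h₁ _ _ hm).mp h2
    have he : B' % d₁ + A % d₁ = A' % d₁ + B % d₁ := by omega
    rw [Nat.add_div h₁, Nat.add_div h₁, he] at h3
    exact ⟨h1, hq2', Nat.ModEq.add_right_cancel' _ h3⟩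
  · rintro ⟨h1, h2, h3⟩
    have h1' : B ≡ A [MOD d₁] := h1
    have hq2 : B' ≡ A' [MOD d₁] := h2
    have hm : (B' + A) % d₁ = (A' + B) % d₁ := hq2.add h1'.symm
    refine ⟨h1, (nat_key d₁ d₂ h₁ _ _ hm).mpr ?_⟩
    have he : B' % d₁ + A % d₁ = A' % d₁ + B % d₁ := by omega
    rw [Nat.add_div h₁, Nat.add_div h₁, he]
    exact h3.add_right _

private lemma fin_eq_add_sub_iff {n : ℕ} [NeZero n] (a b a' b' : Fin n) :
    b' = a' + (b - a) ↔ (b' : ℕ) + a ≡ (a' : ℕ) + b [MOD n] := by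
  rw [← add_sub_assoc, eq_sub_iff_add_eq, Fin.ext_iff, Fin.val_add, Fin.val_add]
  exact Iff.rfl

private lemma fin_sub_mod_iff {d₁ d₂ : ℕ} [NeZero d₁] [NeZero d₂] (a b : Fin (d₁ * d₂)) :
    ((b - a : Fin (d₁ * d₂)) : ℕ) % d₁ = 0 ↔ (b : ℕ) % d₁ = (a : ℕ) % d₁ := by
  have hd : NeZero (d₁ * d₂) := ⟨Nat.mul_ne_zero (NeZero.ne _) (NeZero.ne _)⟩
  have hs : b = (b - a) + a := (sub_add_cancel b a).symm
  have hmod : (b : ℕ) ≡ ((b - a : Fin (d₁ * d₂)) : ℕ) + a [MOD d₁] := by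
    have := (Fin.ext_iff.mp hs).trans (Fin.val_add _ _)
    calc (b : ℕ) % d₁ = (((b - a : Fin (d₁ * d₂)) : ℕ) + (a:ℕ)) % (d₁ * d₂) % d₁ := by
          rw [← this]
      _ = (((b - a : Fin (d₁ * d₂)) : ℕ) + (a:ℕ)) % d₁ :=
          Nat.mod_mod_of_dvd _ ⟨d₂, rfl⟩
  constructor
  · intro h
    have h0 : ((b - a : Fin (d₁ * d₂)) : ℕ) ≡ 0 [MOD d₁] := by
      simp [Nat.ModEq, h]
    have := hmod.trans (h0.add_right (a : ℕ))
    simpa [Nat.ModEq] using this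
  · intro h
    have h' : ((b - a : Fin (d₁ * d₂)) : ℕ) + (a:ℕ) ≡ 0 + (a:ℕ) [MOD d₁] := by
      have : (b : ℕ) ≡ (a : ℕ) [MOD d₁] := h
      simpa using (hmod.symm.trans this)
    have := Nat.ModEq.add_right_cancel' _ h'
    simpa [Nat.ModEq, Nat.mod_eq_of_lt] using this

private lemma key_iff (d₁ d₂ : ℕ) [NeZero d₁] [NeZero d₂] (a b a' b' : Fin (d₁ * d₂)) :
    (((b - a : Fin (d₁ * d₂)) : ℕ) % d₁ = 0 ∧ b' = a' + (b - a)) ↔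
    (finMod b = finMod a ∧ finMod b' = finMod a' ∧
      (finDiv b' : Fin d₂) = finDiv a' + (finDiv b - finDiv a)) := by
  have hd : NeZero (d₁ * d₂) := ⟨Nat.mul_ne_zero (NeZero.ne _) (NeZero.ne _)⟩
  have h₁ : 0 < d₁ := Nat.pos_of_ne_zero (NeZero.ne d₁)
  rw [fin_eq_add_sub_iff, fin_eq_add_sub_iff, fin_sub_mod_iff]
  have e1 : (finMod b = finMod a) ↔ (b : ℕ) % d₁ = (a : ℕ) % d₁ := by
    simp [finMod, Fin.ext_iff]
  have e2 : (finMod b' = finMod a') ↔ (b' : ℕ) % d₁ = (a' : ℕ) % d₁ := by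
    simp [finMod, Fin.ext_iff]
  rw [e1, e2]
  simpa [finDiv] using nat_main d₁ d₂ h₁ (a : ℕ) (b : ℕ) (a' : ℕ) (b' : ℕ)

theorem rhoLam_factorizes (d₁ d₂ : ℕ) [NeZero d₁] [NeZero d₂]
    (lam : Fin (d₁ * d₂) → ℝ)
    (hlam : ∀ l, lam l = if (l : ℕ) % d₁ = 0 then (1 / d₂ : ℝ) else 0)
    (a b a' b' : Fin (d₁ * d₂)) :
    (∑ l, ((lam l : ℝ) : ℂ) • outer (Psi' (d₁ * d₂) l)) (a, b) (a', b') =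
      outer (Psi' d₁ 0) (finMod a, finMod b) (finMod a', finMod b') *
      (∑ k, ((1 / d₂ : ℂ)) • outer (Psi' d₂ k)) ((finDiv a, finDiv b))
        ((finDiv a', finDiv b')) := by
  have hd : NeZero (d₁ * d₂) := ⟨Nat.mul_ne_zero (NeZero.ne _) (NeZero.ne _)⟩
  have h1pos : 0 < d₁ := Nat.pos_of_ne_zero (NeZero.ne d₁)
  have h2pos : 0 < d₂ := Nat.pos_of_ne_zero (NeZero.ne d₂)
  -- collapse the LHS sum
  have hL : (∑ l, ((lam l : ℝ) : ℂ) • outer (Psi' (d₁ * d₂) l)) (a, b) (a', b') =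
      ((lam (b - a) : ℝ) : ℂ) * (Psi' (d₁ * d₂) (b - a) (a, b) *
        (starRingEnd ℂ) (Psi' (d₁ * d₂) (b - a) (a', b'))) := by
    rw [Matrix.sum_apply]
    rw [Finset.sum_eq_single_of_mem (b - a) (Finset.mem_univ _)]
    · rfl
    · intro l _ hl
      have hb : b ≠ a + l := by
        intro h; exact hl (by rw [h]; abel)
      simp [Psi', outer, hb]
  -- collapse the RHS sum
  have hR : (∑ k, ((1 / d₂ : ℂ)) • outer (Psi' d₂ k)) ((finDiv a, finDiv b))
        ((finDiv a', finDiv b')) =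
      (1 / d₂ : ℂ) * (Psi' d₂ (finDiv b - finDiv a) (finDiv a, finDiv b) *
        (starRingEnd ℂ) (Psi' d₂ (finDiv b - finDiv a) (finDiv a', finDiv b'))) := by
    rw [Matrix.sum_apply]
    rw [Finset.sum_eq_single_of_mem (finDiv b - finDiv a) (Finset.mem_univ _)]
    · rfl
    · intro k _ hk
      have hb : (finDiv b : Fin d₂) ≠ finDiv a + k := by
        intro h; exact hk (by rw [h]; abel)
      simp [Psi', outer, hb]
  rw [hL, hR]
  have hba : b = a + (b - a) := by abel
  have hdivba : (finDiv b : Fin d₂) = finDiv a + (finDiv b - finDiv a) := by abel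
  rw [hlam]
  by_cases hP : (((b - a : Fin (d₁ * d₂)) : ℕ) % d₁ = 0 ∧ b' = a' + (b - a))
  · obtain ⟨hQ1, hQ2, hQ3⟩ := (key_iff d₁ d₂ a b a' b').mp hP
    rw [if_pos hP.1]
    simp only [Psi', outer, add_zero]
    rw [if_pos hba, if_pos hP.2, if_pos hQ1, if_pos hQ2, if_pos hdivba, if_pos hQ3]
    rw [conj_sqrt_mul d₁ h1pos, conj_sqrt_mul d₂ h2pos,
      conj_sqrt_mul (d₁ * d₂) (Nat.mul_pos h1pos h2pos)]
    push_cast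
    have hd1 : (d₁ : ℂ) ≠ 0 := Nat.cast_ne_zero.mpr (NeZero.ne d₁)
    have hd2 : (d₂ : ℂ) ≠ 0 := Nat.cast_ne_zero.mpr (NeZero.ne d₂)
    field_simp
  · have hQ : ¬ (finMod b = finMod a ∧ finMod b' = finMod a' ∧
        (finDiv b' : Fin d₂) = finDiv a' + (finDiv b - finDiv a)) :=
      fun h => hP ((key_iff d₁ d₂ a b a' b').mpr h)
    have hR0 : outer (Psi' d₁ 0) (finMod a, finMod b) (finMod a', finMod b') *
        ((1 / d₂ : ℂ) * (Psi' d₂ (finDiv b - finDiv a) (finDiv a, finDiv b) *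
          (starRingEnd ℂ) (Psi' d₂ (finDiv b - finDiv a) (finDiv a', finDiv b')))) = 0 := by
      rcases not_and_or.mp hQ with hq1 | hq23
      · have h0 : Psi' d₁ 0 (finMod a, finMod b) = 0 := if_neg (by simpa using hq1)
        simp [outer, h0]
      · rcases not_and_or.mp hq23 with hq2 | hq3
        · have h0 : Psi' d₁ 0 (finMod a', finMod b') = 0 := if_neg (by simpa using hq2)
          simp [outer, h0]
        · have h0 : Psi' d₂ (finDiv b - finDiv a) (finDiv a', finDiv b') = 0 := if_neg hq3
          simp [outer, h0]
    rw [hR0]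
    rcases not_and_or.mp hP with h1 | h2
    · rw [if_neg h1]
      simp
    · have h0 : Psi' (d₁ * d₂) (b - a) (a', b') = 0 := if_neg h2
      simp [h0]
end
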